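/- arXiv:2211.07208 — 3 statements merged into one kernel-verified Lean document; each statement's English description precedes it below -/
import Mathlib

section
/- Let M₁ and M₂ be independent and uniform on ℳ₁ and ℳ₂ respectively, set X₁ⁿ = g₁(M₁) and X₂ⁿ = g₂(M₂), and conditionally on (X₁ⁿ,X₂ⁿ) let Y₁,…,Yₙ be independent with Yᵢ ~ p(·|X₁ᵢ,X₂ᵢ). Decode M̂₁ = ψ₁(Yⁿ) and M̂₂ = ψ₂(Yⁿ, g₁(M̂₁)). Then P{M̂₁ ≠ M₁ or M̂₂ ≠ M₂} ≤ ε₁ + ε₂ + δ₁ + δ₂. (Error guarantee of the successive-cancellation multiple access channel coding scheme built from two asymmetric channel codes.) -/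
/-!
If `ψ₁` decodes correctly, the second decoder is handed the true codeword `g₁(M₁)`, so by the
union bound the joint error is at most the error of decoder 1, with `X₂ⁿ = g₂(M₂)` treated as part
of the channel, plus the error of decoder 2, with `X₁ⁿ = g₁(M₁)` given as side information. Each
of these is an average over a codeword of a quantity with values in `[0, 1]`. Replacing the
codeword law by the i.i.d. law `∏ p(xᵢ)` turns the averages into `ε₁` and `ε₂`, and costs at most
the total variation distances `δ₂` and `δ₁`.
-/

open Finset

namespace SuccessiveCancellation

section Distributions

variable {α β : Type*} [Fintype α] [Fintype β]

noncomputable def tvDist (q p : α → ℝ) : ℝ := 1 / 2 * ∑ a, |q a - p a|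

def pushforward [DecidableEq β] (μ : α → ℝ) (g : α → β) (b : β) : ℝ :=
  ∑ a, if g a = b then μ a else 0

theorem sum_mul_le_sum_mul_add_tvDist (q p f : α → ℝ) (hf0 : ∀ a, 0 ≤ f a) (hf1 : ∀ a, f a ≤ 1)
    (hqp : ∑ a, q a = ∑ a, p a) :
    ∑ a, q a * f a ≤ ∑ a, p a * f a + tvDist q p := by
  have hpointwise : ∀ a ∈ univ, q a * f a ≤ p a * f a + (|q a - p a| + (q a - p a)) / 2 := by
    intro a _
    rcases abs_cases (q a - p a) with ⟨h, _⟩ | ⟨h, _⟩ <;> rw [h] <;> nlinarith [hf0 a, hf1 a]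
  have hzero : ∑ a, (q a - p a) = 0 := by rw [sum_sub_distrib, hqp, sub_self]
  calc ∑ a, q a * f a ≤ ∑ a, (p a * f a + (|q a - p a| + (q a - p a)) / 2) :=
        sum_le_sum hpointwise
    _ = ∑ a, p a * f a + tvDist q p := by
        rw [sum_add_distrib, ← sum_div, sum_add_distrib, hzero, tvDist]; ring

theorem sum_pushforward_mul [DecidableEq β] (μ : α → ℝ) (g : α → β) (h : β → ℝ) :
    ∑ b, pushforward μ g b * h b = ∑ a, μ a * h (g a) := by
  simp only [pushforward, sum_mul, ite_mul, zero_mul]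
  rw [sum_comm]
  exact sum_congr rfl fun a _ => by rw [sum_ite_eq, if_pos (mem_univ _)]

theorem sum_mul_comp_le_add_tvDist [DecidableEq β] (μ : α → ℝ) (g : α → β) (P f : β → ℝ)
    (hf0 : ∀ b, 0 ≤ f b) (hf1 : ∀ b, f b ≤ 1) (hP : ∑ b, P b = ∑ a, μ a) :
    ∑ a, μ a * f (g a) ≤ ∑ b, P b * f b + tvDist (pushforward μ g) P := by
  have hmass : ∑ b, pushforward μ g b = ∑ b, P b := by
    simpa [hP] using sum_pushforward_mul μ g fun _ => 1
  rw [← sum_pushforward_mul]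
  exact sum_mul_le_sum_mul_add_tvDist _ _ f hf0 hf1 hmass

theorem sum_one_div_card (M : Type*) [Fintype M] [Nonempty M] :
    ∑ _m : M, 1 / (Fintype.card M : ℝ) = 1 := by
  rw [sum_const, card_univ, nsmul_eq_mul, mul_one_div_cancel]
  exact Nat.cast_ne_zero.mpr Fintype.card_ne_zero

end Distributions

section ErrorProbability

variable {M Y S : Type*} [Fintype M] [Fintype Y] [Fintype S] [DecidableEq M]

/-- `V m` is the output law given the message `m`, with the encoder folded into `V`. -/
def errorProb (μ : M → ℝ) (V : M → Y → ℝ) (ψ : Y → M) : ℝ :=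
  ∑ m, ∑ y, if ψ y ≠ m then μ m * V m y else 0

theorem errorProb_nonneg {μ : M → ℝ} {V : M → Y → ℝ} (hμ : ∀ m, 0 ≤ μ m)
    (hV : ∀ m y, 0 ≤ V m y) (ψ : Y → M) : 0 ≤ errorProb μ V ψ :=
  sum_nonneg fun m _ => sum_nonneg fun y _ => by
    split_ifs
    · exact mul_nonneg (hμ m) (hV m y)
    · exact le_rfl

theorem errorProb_le_one {μ : M → ℝ} {V : M → Y → ℝ} (hμ0 : ∀ m, 0 ≤ μ m)
    (hμ1 : ∑ m, μ m = 1) (hV0 : ∀ m y, 0 ≤ V m y) (hV1 : ∀ m, ∑ y, V m y = 1) (ψ : Y → M) :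
    errorProb μ V ψ ≤ 1 :=
  calc errorProb μ V ψ ≤ ∑ m, ∑ y, μ m * V m y :=
        sum_le_sum fun m _ => sum_le_sum fun y _ => by
          split_ifs
          · exact le_rfl
          · exact mul_nonneg (hμ0 m) (hV0 m y)
    _ = 1 := by simp only [← mul_sum, hV1, mul_one, hμ1]

theorem sum_mul_errorProb_eq_mixture (μ : M → ℝ) (P : S → ℝ) (V : S → M → Y → ℝ)
    (ψ : Y → M) :
    ∑ s, P s * errorProb μ (V s) ψ = errorProb μ (fun m y => ∑ s, P s * V s m y) ψ := by
  simp only [errorProb, mul_sum, mul_ite, mul_zero]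
  rw [sum_comm]
  refine sum_congr rfl fun m _ => ?_
  rw [sum_comm]
  refine sum_congr rfl fun y _ => ?_
  split_ifs
  · exact sum_congr rfl fun s _ => by ring
  · exact sum_const_zero

theorem sum_mul_errorProb_eq_prod (μ : M → ℝ) (P : S → ℝ) (V : S → M → Y → ℝ)
    (ψ : Y → S → M) :
    ∑ s, P s * errorProb μ (V s) (fun y => ψ y s) =
      errorProb μ (fun m (ys : Y × S) => P ys.2 * V ys.2 m ys.1) (fun ys => ψ ys.1 ys.2) := by
  simp only [errorProb, Fintype.sum_prod_type, mul_sum, mul_ite, mul_zero]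
  rw [sum_comm]
  refine sum_congr rfl fun m _ => ?_
  rw [sum_comm]
  refine sum_congr rfl fun y _ => sum_congr rfl fun s _ => ?_
  split_ifs
  · ring
  · rfl

end ErrorProbability

section Successive

variable {M₁ M₂ X₁ X₂ Y : Type*} [Fintype M₁] [Fintype M₂] [Fintype Y] [DecidableEq M₁]
  [DecidableEq M₂]

theorem successive_error_le_sum_errorProb (μ₁ : M₁ → ℝ) (μ₂ : M₂ → ℝ) (V : M₁ → M₂ → Y → ℝ)
    (hμ₁ : ∀ m, 0 ≤ μ₁ m) (hμ₂ : ∀ m, 0 ≤ μ₂ m) (hV : ∀ m₁ m₂ y, 0 ≤ V m₁ m₂ y)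
    (g₁ : M₁ → X₁) (ψ₁ : Y → M₁) (ψ₂ : Y → X₁ → M₂) :
    ∑ m₁, ∑ m₂, ∑ y, (if ψ₁ y ≠ m₁ ∨ ψ₂ y (g₁ (ψ₁ y)) ≠ m₂ then
        μ₁ m₁ * μ₂ m₂ * V m₁ m₂ y else 0) ≤
      ∑ m₂, μ₂ m₂ * errorProb μ₁ (fun m₁ => V m₁ m₂) ψ₁ +
        ∑ m₁, μ₁ m₁ * errorProb μ₂ (V m₁) (fun y => ψ₂ y (g₁ m₁)) := by
  simp only [errorProb, mul_sum, mul_ite, mul_zero]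
  rw [sum_comm (s := univ (α := M₂)), ← sum_add_distrib]
  refine sum_le_sum fun m₁ _ => ?_
  rw [← sum_add_distrib]
  refine sum_le_sum fun m₂ _ => ?_
  rw [← sum_add_distrib]
  refine sum_le_sum fun y _ => ?_
  have hc : 0 ≤ μ₁ m₁ * μ₂ m₂ * V m₁ m₂ y := mul_nonneg (mul_nonneg (hμ₁ m₁) (hμ₂ m₂)) (hV _ _ _)
  rw [mul_left_comm (μ₂ m₂), ← mul_assoc]
  by_cases h₁ : ψ₁ y = m₁
  · -- decoder 1 is right, so decoder 2 is handed the true codeword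
    subst h₁
    split_ifs <;> simp_all
  · split_ifs <;> simp_all

theorem successive_error_le_errorProb_add_tvDist [DecidableEq X₁] [DecidableEq X₂]
    [Fintype X₁] [Fintype X₂] (W : X₁ → X₂ → Y → ℝ) (hW0 : ∀ a b y, 0 ≤ W a b y)
    (hW1 : ∀ a b, ∑ y, W a b y = 1) (P₁ : X₁ → ℝ) (P₂ : X₂ → ℝ) (hP₁ : ∑ x, P₁ x = 1)
    (hP₂ : ∑ x, P₂ x = 1) (μ₁ : M₁ → ℝ) (μ₂ : M₂ → ℝ) (hμ₁0 : ∀ m, 0 ≤ μ₁ m)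
    (hμ₁1 : ∑ m, μ₁ m = 1) (hμ₂0 : ∀ m, 0 ≤ μ₂ m) (hμ₂1 : ∑ m, μ₂ m = 1)
    (g₁ : M₁ → X₁) (g₂ : M₂ → X₂) (ψ₁ : Y → M₁) (ψ₂ : Y → X₁ → M₂) :
    ∑ m₁, ∑ m₂, ∑ y, (if ψ₁ y ≠ m₁ ∨ ψ₂ y (g₁ (ψ₁ y)) ≠ m₂ then
        μ₁ m₁ * μ₂ m₂ * W (g₁ m₁) (g₂ m₂) y else 0) ≤
      errorProb μ₁ (fun m₁ y => ∑ x₂, P₂ x₂ * W (g₁ m₁) x₂ y) ψ₁ +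
        errorProb μ₂ (fun m₂ (yx : Y × X₁) => P₁ yx.2 * W yx.2 (g₂ m₂) yx.1)
          (fun yx => ψ₂ yx.1 yx.2) +
        tvDist (pushforward μ₁ g₁) P₁ + tvDist (pushforward μ₂ g₂) P₂ := by
  have hF := sum_mul_comp_le_add_tvDist μ₂ g₂ P₂
    (fun x₂ => errorProb μ₁ (fun m₁ => W (g₁ m₁) x₂) ψ₁)
    (fun _ => errorProb_nonneg hμ₁0 (fun _ => hW0 _ _) ψ₁)
    (fun _ => errorProb_le_one hμ₁0 hμ₁1 (fun _ => hW0 _ _) (fun _ => hW1 _ _) ψ₁)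
    (hP₂.trans hμ₂1.symm)
  have hG := sum_mul_comp_le_add_tvDist μ₁ g₁ P₁
    (fun x₁ => errorProb μ₂ (fun m₂ => W x₁ (g₂ m₂)) (fun y => ψ₂ y x₁))
    (fun _ => errorProb_nonneg hμ₂0 (fun _ => hW0 _ _) _)
    (fun _ => errorProb_le_one hμ₂0 hμ₂1 (fun _ => hW0 _ _) (fun _ => hW1 _ _) _)
    (hP₁.trans hμ₁1.symm)
  rw [sum_mul_errorProb_eq_mixture μ₁ P₂] at hF
  rw [sum_mul_errorProb_eq_prod μ₂ P₁] at hG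
  have hunion := successive_error_le_sum_errorProb μ₁ μ₂ (fun m₁ m₂ => W (g₁ m₁) (g₂ m₂))
    hμ₁0 hμ₂0 (fun _ _ => hW0 _ _) g₁ ψ₁ ψ₂
  linarith

end Successive

end SuccessiveCancellation

theorem stmt17_general (n : ℕ) (𝒴 : Type) [Fintype 𝒴]
    (ch : ZMod 2 → ZMod 2 → 𝒴 → ℝ) (hch0 : ∀ x₁ x₂ y, 0 ≤ ch x₁ x₂ y)
    (hch1 : ∀ x₁ x₂, ∑ y : 𝒴, ch x₁ x₂ y = 1)
    (p1 p2 : ZMod 2 → ℝ) (hp11 : ∑ x : ZMod 2, p1 x = 1)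
    (hp21 : ∑ x : ZMod 2, p2 x = 1)
    (M₁ M₂ : Type) [Fintype M₁] [DecidableEq M₁] [Nonempty M₁]
    [Fintype M₂] [DecidableEq M₂] [Nonempty M₂]
    (g₁ : M₁ → (Fin n → ZMod 2)) (ψ₁ : (Fin n → 𝒴) → M₁)
    (g₂ : M₂ → (Fin n → ZMod 2)) (ψ₂ : (Fin n → 𝒴) → (Fin n → ZMod 2) → M₂)
    (ε₁ ε₂ δ₁ δ₂ : ℝ)
    (hε₁ : ∑ m₁ : M₁, ∑ y : Fin n → 𝒴,
        (if ψ₁ y ≠ m₁ then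
          (1 / (Fintype.card M₁ : ℝ)) *
            ∏ i, (∑ x₂ : ZMod 2, p2 x₂ * ch (g₁ m₁ i) x₂ (y i))
        else 0) = ε₁)
    (hδ₁ : (1 / 2) * ∑ x₁ : Fin n → ZMod 2,
        |(∑ m₁ : M₁, if g₁ m₁ = x₁ then (1 / (Fintype.card M₁ : ℝ)) else 0)
          - ∏ i, p1 (x₁ i)| = δ₁)
    (hε₂ : ∑ m₂ : M₂, ∑ y : Fin n → 𝒴, ∑ x₁ : Fin n → ZMod 2,
        (if ψ₂ y x₁ ≠ m₂ then
          (1 / (Fintype.card M₂ : ℝ)) *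
            ∏ i, (p1 (x₁ i) * ch (x₁ i) (g₂ m₂ i) (y i))
        else 0) = ε₂)
    (hδ₂ : (1 / 2) * ∑ x₂ : Fin n → ZMod 2,
        |(∑ m₂ : M₂, if g₂ m₂ = x₂ then (1 / (Fintype.card M₂ : ℝ)) else 0)
          - ∏ i, p2 (x₂ i)| = δ₂) :
    ∑ m₁ : M₁, ∑ m₂ : M₂, ∑ y : Fin n → 𝒴,
      (if ψ₁ y ≠ m₁ ∨ ψ₂ y (g₁ (ψ₁ y)) ≠ m₂ then
        (1 / (Fintype.card M₁ : ℝ)) * (1 / (Fintype.card M₂ : ℝ)) *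
          ∏ i, ch (g₁ m₁ i) (g₂ m₂ i) (y i)
      else 0) ≤ ε₁ + ε₂ + δ₁ + δ₂ := by
  have hmemoryless : ∀ a b : Fin n → ZMod 2, ∑ y : Fin n → 𝒴, ∏ i, ch (a i) (b i) (y i) = 1 :=
    fun a b => by simp only [← Fintype.prod_sum, hch1, prod_const_one]
  have hiid : ∀ p : ZMod 2 → ℝ, ∑ x, p x = 1 → ∑ x : Fin n → ZMod 2, ∏ i, p (x i) = 1 :=
    fun p hp => by rw [← Fintype.sum_pow, hp, one_pow]
  calc _ ≤ _ := SuccessiveCancellation.successive_error_le_errorProb_add_tvDist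
        (fun a b y => ∏ i, ch (a i) (b i) (y i))
        (fun _ _ _ => prod_nonneg fun _ _ => hch0 _ _ _) hmemoryless
        (fun x => ∏ i, p1 (x i)) (fun x => ∏ i, p2 (x i)) (hiid p1 hp11) (hiid p2 hp21)
        (fun _ => 1 / (Fintype.card M₁ : ℝ)) (fun _ => 1 / (Fintype.card M₂ : ℝ))
        (fun _ => by positivity) (SuccessiveCancellation.sum_one_div_card M₁)
        (fun _ => by positivity) (SuccessiveCancellation.sum_one_div_card M₂) g₁ g₂ ψ₁ ψ₂
    _ = ε₁ + ε₂ + δ₁ + δ₂ := by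
        rw [← hε₁, ← hε₂, ← hδ₁, ← hδ₂]
        simp only [SuccessiveCancellation.errorProb, Fintype.sum_prod_type, Fintype.prod_sum,
          prod_mul_distrib]
        rfl

/-- **Successive-cancellation MAC coding from two asymmetric channel codes.**
With `M₁, M₂` independent uniform messages, `X₁ⁿ = g₁(M₁)`, `X₂ⁿ = g₂(M₂)`,
`Yⁿ` the output of the MAC `p(y|x₁,x₂)`, and decoding
`M̂₁ = ψ₁(Yⁿ)`, `M̂₂ = ψ₂(Yⁿ, g₁(M̂₁))`:
`P{M̂₁ ≠ M₁ or M̂₂ ≠ M₂} ≤ ε₁ + ε₂ + δ₁ + δ₂`, where `ε₁` (resp. `ε₂`) is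
the error probability of code 1 (resp. code 2) over the induced channel
`p(y|x₁) = ∑_{x₂} p(x₂)p(y|x₁,x₂)` (resp. `p(y,x₁|x₂) = p(x₁)p(y|x₁,x₂)`),
and `δ₁, δ₂` are the total variation distances of the codeword laws from the
target i.i.d. input laws `p(x₁)`, `p(x₂)`. -/
theorem stmt17 (n : ℕ) (𝒴 : Type) [Fintype 𝒴]
    (ch : ZMod 2 → ZMod 2 → 𝒴 → ℝ) (hch0 : ∀ x₁ x₂ y, 0 ≤ ch x₁ x₂ y)
    (hch1 : ∀ x₁ x₂, ∑ y : 𝒴, ch x₁ x₂ y = 1)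
    (p1 p2 : ZMod 2 → ℝ) (hp10 : ∀ x, 0 ≤ p1 x) (hp11 : ∑ x : ZMod 2, p1 x = 1)
    (hp20 : ∀ x, 0 ≤ p2 x) (hp21 : ∑ x : ZMod 2, p2 x = 1)
    (M₁ M₂ : Type) [Fintype M₁] [DecidableEq M₁] [Nonempty M₁]
    [Fintype M₂] [DecidableEq M₂] [Nonempty M₂]
    (g₁ : M₁ → (Fin n → ZMod 2)) (ψ₁ : (Fin n → 𝒴) → M₁)
    (g₂ : M₂ → (Fin n → ZMod 2)) (ψ₂ : (Fin n → 𝒴) → (Fin n → ZMod 2) → M₂)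
    (ε₁ ε₂ δ₁ δ₂ : ℝ)
    (hε₁ : ∑ m₁ : M₁, ∑ y : Fin n → 𝒴,
        (if ψ₁ y ≠ m₁ then
          (1 / (Fintype.card M₁ : ℝ)) *
            ∏ i, (∑ x₂ : ZMod 2, p2 x₂ * ch (g₁ m₁ i) x₂ (y i))
        else 0) = ε₁)
    (hδ₁ : (1 / 2) * ∑ x₁ : Fin n → ZMod 2,
        |(∑ m₁ : M₁, if g₁ m₁ = x₁ then (1 / (Fintype.card M₁ : ℝ)) else 0)
          - ∏ i, p1 (x₁ i)| = δ₁)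
    (hε₂ : ∑ m₂ : M₂, ∑ y : Fin n → 𝒴, ∑ x₁ : Fin n → ZMod 2,
        (if ψ₂ y x₁ ≠ m₂ then
          (1 / (Fintype.card M₂ : ℝ)) *
            ∏ i, (p1 (x₁ i) * ch (x₁ i) (g₂ m₂ i) (y i))
        else 0) = ε₂)
    (hδ₂ : (1 / 2) * ∑ x₂ : Fin n → ZMod 2,
        |(∑ m₂ : M₂, if g₂ m₂ = x₂ then (1 / (Fintype.card M₂ : ℝ)) else 0)
          - ∏ i, p2 (x₂ i)| = δ₂) :
    ∑ m₁ : M₁, ∑ m₂ : M₂, ∑ y : Fin n → 𝒴,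
      (if ψ₁ y ≠ m₁ ∨ ψ₂ y (g₁ (ψ₁ y)) ≠ m₂ then
        (1 / (Fintype.card M₁ : ℝ)) * (1 / (Fintype.card M₂ : ℝ)) *
          ∏ i, ch (g₁ m₁ i) (g₂ m₂ i) (y i)
      else 0) ≤ ε₁ + ε₂ + δ₁ + δ₂ :=
  stmt17_general n 𝒴 ch hch0 hch1 p1 p2 hp11 hp21 M₁ M₂ g₁ ψ₁ g₂ ψ₂ ε₁ ε₂ δ₁ δ₂ hε₁ hδ₁ hε₂ hδ₂
end

section
/- Let ℳ₁ and ℳ₂ be finite sets, g₁: ℳ₁ → F₂ⁿ, g₂: ℳ₂ × F₂ⁿ → F₂ⁿ, and let M₁ and M₂ be independent uniform random variables on ℳ₁ and ℳ₂. Assume: (i) (1/2)∑_{x₁ⁿ} |P{g₁(M₁) = x₁ⁿ} − ∏ᵢ p(x₁ᵢ)| ≤ δ₁; and (ii) for X̃₁ⁿ i.i.d. with law p(x₁) and independent of M₂, (1/2)∑_{x₁ⁿ,x₂ⁿ} |P{X̃₁ⁿ = x₁ⁿ, g₂(M₂,X̃₁ⁿ) = x₂ⁿ} − ∏ᵢ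 p(x₁ᵢ,x₂ᵢ)| ≤ δ₂. Then, with X₁ⁿ = g₁(M₁) and X₂ⁿ = g₂(M₂, X₁ⁿ): (1/2)∑_{x₁ⁿ,x₂ⁿ} |P{X₁ⁿ = x₁ⁿ, X₂ⁿ = x₂ⁿ} − ∏ᵢ p(x₁ᵢ,x₂ᵢ)| ≤ δ₁ + δ₂. (Channel-input shaping guarantee of the Marton coding scheme: the pair of transmitted sequences is within δ₁+δ₂ of the target i.i.d. input distribution.) -/
/-!
The joint law of `(X₁ⁿ, X₂ⁿ)` factors as `q(x₁) K(x₁, x₂)`, with `q` the law of `g₁(M₁)` and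
`K(x₁, ·)` the law of `g₂(M₂, x₁)`, while hypothesis (ii) is about `π(x₁) K(x₁, x₂)` with
`π = ∏ᵢ p(x₁ᵢ)`. The triangle inequality through `π K` splits the distance into
`‖(q - π) K‖₁ + ‖π K - P‖₁`, and the first term is at most `‖q - π‖₁` because a
(sub-)stochastic kernel does not increase the `ℓ¹` norm.
-/

open Finset

section Kernel

variable {α β : Type*} [Fintype α] [Fintype β]

theorem sum_abs_mul_kernel_sub_le (q π : α → ℝ) (K P : α → β → ℝ)
    (hK0 : ∀ a b, 0 ≤ K a b) (hK1 : ∀ a, ∑ b, K a b ≤ 1) :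
    ∑ a, ∑ b, |q a * K a b - P a b|
      ≤ ∑ a, |q a - π a| + ∑ a, ∑ b, |π a * K a b - P a b| := by
  have hpush : ∀ a, ∑ b, |q a - π a| * K a b ≤ |q a - π a| := fun a => by
    rw [← mul_sum]
    exact mul_le_of_le_one_right (abs_nonneg _) (hK1 a)
  calc ∑ a, ∑ b, |q a * K a b - P a b|
      ≤ ∑ a, ∑ b, (|q a - π a| * K a b + |π a * K a b - P a b|) := by
        gcongr with a _ b _
        calc |q a * K a b - P a b|
            = |(q a - π a) * K a b + (π a * K a b - P a b)| := by ring_nf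
          _ ≤ |(q a - π a) * K a b| + |π a * K a b - P a b| := abs_add_le _ _
          _ = |q a - π a| * K a b + |π a * K a b - P a b| := by
            rw [abs_mul, abs_of_nonneg (hK0 a b)]
    _ ≤ ∑ a, |q a - π a| + ∑ a, ∑ b, |π a * K a b - P a b| := by
        simp only [sum_add_distrib]
        gcongr with a _
        exact hpush a

end Kernel

section UniformLaw

variable {M X : Type*} [Fintype M] [DecidableEq X]

/-- Identically zero when `M` is empty, so its total mass is only `≤ 1`. -/
noncomputable def uniformLaw (g : M → X) (x : X) : ℝ :=
  ∑ m, if g m = x then 1 / (Fintype.card M : ℝ) else 0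

theorem uniformLaw_nonneg (g : M → X) (x : X) : 0 ≤ uniformLaw g x :=
  sum_nonneg fun _ _ => by positivity

theorem sum_uniformLaw_le_one [Fintype X] (g : M → X) : ∑ x, uniformLaw g x ≤ 1 := by
  simp only [uniformLaw]
  rw [sum_comm]
  simp only [sum_ite_eq, mem_univ, if_true, sum_const, card_univ, nsmul_eq_mul, one_div]
  exact mul_inv_le_one

theorem sum_ite_eq_mul_uniformLaw (g : M → X) (x : X) (c : ℝ) :
    (∑ m, if g m = x then 1 / (Fintype.card M : ℝ) * c else 0) = c * uniformLaw g x := by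
  rw [mul_comm c]
  simp only [uniformLaw, sum_mul, ite_mul, zero_mul]

theorem sum_sum_ite_eq_uniformLaw_mul {N Y : Type*} [Fintype N] [DecidableEq Y]
    (g₁ : M → X) (g₂ : N → X → Y) (x₁ : X) (x₂ : Y) :
    (∑ m₁ : M, ∑ m₂ : N,
        if g₁ m₁ = x₁ ∧ g₂ m₂ (g₁ m₁) = x₂ then
          1 / (Fintype.card M : ℝ) * (1 / (Fintype.card N : ℝ))
        else 0)
      = uniformLaw g₁ x₁ * uniformLaw (fun m₂ => g₂ m₂ x₁) x₂ := by
  rw [uniformLaw, uniformLaw, sum_mul_sum]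
  refine sum_congr rfl fun m₁ _ => sum_congr rfl fun m₂ _ => ?_
  by_cases h : g₁ m₁ = x₁
  · subst h
    simp only [true_and, if_true, mul_ite, mul_zero]
  · simp only [h, false_and, if_false, zero_mul]

end UniformLaw

theorem stmt18_general (n : ℕ)
    (p : ZMod 2 → ZMod 2 → ℝ)
    (M₁ M₂ : Type) [Fintype M₁] [Fintype M₂]
    (g₁ : M₁ → (Fin n → ZMod 2))
    (g₂ : M₂ → (Fin n → ZMod 2) → (Fin n → ZMod 2))
    (δ₁ δ₂ : ℝ)
    (h₁ : (1 / 2) * ∑ x₁ : Fin n → ZMod 2,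
        |(∑ m₁ : M₁, if g₁ m₁ = x₁ then (1 / (Fintype.card M₁ : ℝ)) else 0)
          - ∏ i, (∑ x₂ : ZMod 2, p (x₁ i) x₂)| ≤ δ₁)
    (h₂ : (1 / 2) * ∑ x₁ : Fin n → ZMod 2, ∑ x₂ : Fin n → ZMod 2,
        |(∑ m₂ : M₂,
            if g₂ m₂ x₁ = x₂ then
              (1 / (Fintype.card M₂ : ℝ)) * ∏ i, (∑ x₂' : ZMod 2, p (x₁ i) x₂')
            else 0)
          - ∏ i, p (x₁ i) (x₂ i)| ≤ δ₂) :
    (1 / 2) * ∑ x₁ : Fin n → ZMod 2, ∑ x₂ : Fin n → ZMod 2,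
      |(∑ m₁ : M₁, ∑ m₂ : M₂,
          if g₁ m₁ = x₁ ∧ g₂ m₂ (g₁ m₁) = x₂ then
            (1 / (Fintype.card M₁ : ℝ)) * (1 / (Fintype.card M₂ : ℝ))
          else 0)
        - ∏ i, p (x₁ i) (x₂ i)| ≤ δ₁ + δ₂ := by
  let π : (Fin n → ZMod 2) → ℝ := fun x₁ => ∏ i, ∑ x₂ : ZMod 2, p (x₁ i) x₂
  have hsplit := sum_abs_mul_kernel_sub_le (uniformLaw g₁) π
    (fun x₁ => uniformLaw fun m₂ => g₂ m₂ x₁) (fun x₁ x₂ => ∏ i, p (x₁ i) (x₂ i))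
    (fun _ => uniformLaw_nonneg _) (fun _ => sum_uniformLaw_le_one _)
  simp only [sum_ite_eq_mul_uniformLaw] at h₂
  simp only [sum_sum_ite_eq_uniformLaw_mul]
  change _ * ∑ x₁, |uniformLaw g₁ x₁ - π x₁| ≤ δ₁ at h₁
  linarith

/-- **Channel-input shaping in Marton coding.**  Let `p(x₁,x₂)` be a pmf on
`F₂²` with first marginal `p(x₁)`.  With `M₁, M₂` independent uniform,
`X₁ⁿ = g₁(M₁)`, `X₂ⁿ = g₂(M₂, X₁ⁿ)`, and assuming (i) the law of `g₁(M₁)`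
is within total variation `δ₁` of `∏ᵢ p(x₁ᵢ)`, and (ii) for `X̃₁ⁿ` i.i.d.
`p(x₁)` independent of `M₂` the law of `(X̃₁ⁿ, g₂(M₂,X̃₁ⁿ))` is within total
variation `δ₂` of `∏ᵢ p(x₁ᵢ,x₂ᵢ)`, the joint law of `(X₁ⁿ,X₂ⁿ)` is within
total variation `δ₁ + δ₂` of `∏ᵢ p(x₁ᵢ,x₂ᵢ)`. -/
theorem stmt18 (n : ℕ)
    (p : ZMod 2 → ZMod 2 → ℝ) (hp0 : ∀ x₁ x₂, 0 ≤ p x₁ x₂)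
    (hp1 : ∑ x₁ : ZMod 2, ∑ x₂ : ZMod 2, p x₁ x₂ = 1)
    (M₁ M₂ : Type) [Fintype M₁] [Nonempty M₁] [Fintype M₂] [Nonempty M₂]
    (g₁ : M₁ → (Fin n → ZMod 2))
    (g₂ : M₂ → (Fin n → ZMod 2) → (Fin n → ZMod 2))
    (δ₁ δ₂ : ℝ)
    (h₁ : (1 / 2) * ∑ x₁ : Fin n → ZMod 2,
        |(∑ m₁ : M₁, if g₁ m₁ = x₁ then (1 / (Fintype.card M₁ : ℝ)) else 0)
          - ∏ i, (∑ x₂ : ZMod 2, p (x₁ i) x₂)| ≤ δ₁)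
    (h₂ : (1 / 2) * ∑ x₁ : Fin n → ZMod 2, ∑ x₂ : Fin n → ZMod 2,
        |(∑ m₂ : M₂,
            if g₂ m₂ x₁ = x₂ then
              (1 / (Fintype.card M₂ : ℝ)) * ∏ i, (∑ x₂' : ZMod 2, p (x₁ i) x₂')
            else 0)
          - ∏ i, p (x₁ i) (x₂ i)| ≤ δ₂) :
    (1 / 2) * ∑ x₁ : Fin n → ZMod 2, ∑ x₂ : Fin n → ZMod 2,
      |(∑ m₁ : M₁, ∑ m₂ : M₂,
          if g₁ m₁ = x₁ ∧ g₂ m₂ (g₁ m₁) = x₂ then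
            (1 / (Fintype.card M₁ : ℝ)) * (1 / (Fintype.card M₂ : ℝ))
          else 0)
        - ∏ i, p (x₁ i) (x₂ i)| ≤ δ₁ + δ₂ :=
  stmt18_general n p M₁ M₂ g₁ g₂ δ₁ δ₂ h₁ h₂
end

section
/- Let ℐ₁ and ℐ₂ be finite index sets, and let g₁: F₂ⁿ → ℐ₁, ψ₁: ℐ₁ → F₂ⁿ, g₂: F₂ⁿ → ℐ₂, ψ₂: ℐ₂ × F₂ⁿ → F₂ⁿ satisfy: (i) for X̃₁ⁿ i.i.d. with law p(x₁), the total variation distance between the law of (X̃₁ⁿ, ψ₁(g₁(X̃₁ⁿ))) and the product ∏ᵢ p(x₁ᵢ)p(x̂₁ᵢ|x₁ᵢ) is at most δ₁; (ii) for (X̃₂ⁿ,Ỹⁿ) i.i.d. with law p(x₂,x̂₁), the total variation distance between the law of (X̃₂ⁿ, ψ₂(g₂(X̃₂ⁿ), Ỹⁿ)) and the product ∏ᵢ p(x₂ᵢ)p(x̂₂ᵢ|x₂ᵢ) is at most δ₂. Then, for (X₁ⁿ,X₂ⁿ) i.i.d. with law p(x₁,x₂), X̂₁ⁿ = ψ₁(g₁(X₁ⁿ)),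 and X̂₂ⁿ = ψ₂(g₂(X₂ⁿ), X̂₁ⁿ): (1/n)·E[d_H(X₂ⁿ, X̂₂ⁿ)] ≤ D₂ + δ₁ + δ₂. (Distortion guarantee for the second source in the Berger–Tung distributed lossy compression scheme built from a lossy source code and a Wyner–Ziv code.) -/
/-!
Let `A` be the joint law of `(X₂ⁿ, X̂₂ⁿ)`, `B` the law obtained when `X̂₁ⁿ` is replaced by the
output of the memoryless channel `W₁` applied to `X₁ⁿ`, and `C = ∏ p(x₂ᵢ)W₂(x̂₂ᵢ|x₂ᵢ)`. Since
`(X₂ⁿ, X̂₂ⁿ)` is obtained from `(X₁ⁿ, X̂₁ⁿ)` through one and the same kernel in both cases,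
`‖A - B‖₁ ≤ 2δ₁` by (i), while `‖B - C‖₁ ≤ 2δ₂` is (ii). As `0 ≤ d_H ≤ n`, the expected
distortions under `A` and `C` differ by at most `(n/2)‖A - C‖₁ ≤ n(δ₁ + δ₂)`, and under the
i.i.d. law `C` the expected Hamming distortion is `n` times the per-letter one, at most `n D₂`.
-/

open Finset

section ProductSums

variable {ι α β : Type*} [Fintype ι] [DecidableEq ι] [Fintype α] [Fintype β]

lemma sum_sum_prod_eq_prod_sum_sum (h : ι → α → β → ℝ) :
    ∑ x : ι → α, ∑ y : ι → β, ∏ i, h i (x i) (y i) = ∏ i, ∑ a, ∑ b, h i a b := by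
  simp only [Fintype.prod_sum]

lemma sum_sum_prod_eq_one {q : α → β → ℝ} (hq : ∑ a, ∑ b, q a b = 1) :
    ∑ x : ι → α, ∑ y : ι → β, ∏ i, q (x i) (y i) = 1 := by
  simp [sum_sum_prod_eq_prod_sum_sum fun (_ : ι) => q, hq]

lemma sum_sum_prod_mul_sum_eq {q : α → β → ℝ} (hq : ∑ a, ∑ b, q a b = 1) (f : α → β → ℝ) :
    ∑ x : ι → α, ∑ y : ι → β, (∏ i, q (x i) (y i)) * ∑ k, f (x k) (y k)
      = Fintype.card ι * ∑ a, ∑ b, q a b * f a b := by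
  have coord : ∀ k, ∑ x : ι → α, ∑ y : ι → β, (∏ i, q (x i) (y i)) * f (x k) (y k)
      = ∑ a, ∑ b, q a b * f a b := by
    intro k
    have hsplit : ∀ (x : ι → α) (y : ι → β), (∏ i, q (x i) (y i)) * f (x k) (y k)
        = ∏ i, q (x i) (y i) * if i = k then f (x i) (y i) else 1 := by
      intro x y
      rw [prod_mul_distrib, Fintype.prod_ite_eq']
    simp_rw [hsplit]
    rw [sum_sum_prod_eq_prod_sum_sum fun i a b => q a b * if i = k then f a b else 1]
    rw [Fintype.prod_eq_single k fun i hi => by simp [hi, hq]]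
    simp
  conv_lhs => simp only [mul_sum]
  rw [sum_congr rfl fun x _ => sum_comm, sum_comm]
  simp [coord]

end ProductSums

lemma sum_sum_ite_mul_eq {α β δ : Type*} [Fintype α] [Fintype β] [Fintype δ] [DecidableEq δ]
    (P : α → β → ℝ) (G : α → β → δ) (f : β → δ → ℝ) :
    ∑ x₂, ∑ z, (∑ x₁, if G x₁ x₂ = z then P x₁ x₂ else 0) * f x₂ z
      = ∑ x₁, ∑ x₂, P x₁ x₂ * f x₂ (G x₁ x₂) := by
  conv_rhs => rw [sum_comm]
  refine sum_congr rfl fun x₂ _ => ?_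
  simp_rw [sum_mul, ite_mul, zero_mul]
  rw [sum_comm]
  simp

lemma sum_mul_le_sum_mul_add_of_sum_eq {κ : Type*} [Fintype κ] {A C f : κ → ℝ} {M : ℝ}
    (hAC : ∑ z, A z = ∑ z, C z) (hf0 : ∀ z, 0 ≤ f z) (hfM : ∀ z, f z ≤ M) :
    ∑ z, A z * f z ≤ ∑ z, C z * f z + M / 2 * ∑ z, |A z - C z| := by
  have hpt : ∀ z, A z * f z ≤ C z * f z + M / 2 * (|A z - C z| + (A z - C z)) := by
    intro z
    rcases abs_cases (A z - C z) with ⟨h, _⟩ | ⟨h, _⟩ <;> nlinarith [hf0 z, hfM z]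
  calc ∑ z, A z * f z ≤ ∑ z, (C z * f z + M / 2 * (|A z - C z| + (A z - C z))) :=
        sum_le_sum fun z _ => hpt z
    _ = ∑ z, C z * f z + M / 2 * ∑ z, |A z - C z| := by
        simp only [sum_add_distrib, ← mul_sum, sum_sub_distrib, hAC, sub_self, add_zero]

/-- Decoding with the side information `e x₁` instead of a `W`-channel output `y` moves the joint
law of `(x₂, F x₂ ·)` in `ℓ¹` by at most the `ℓ¹` distance between the laws of `(x₁, e x₁)` and
`(x₁, y)`: both laws are images of these under the same nonnegative kernel. -/
lemma sum_abs_decoded_sub_le {α β γ δ : Type*} [Fintype α] [Fintype β] [Fintype γ] [Fintype δ]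
    [DecidableEq γ] [DecidableEq δ] (P : α → β → ℝ) (hP : ∀ a b, 0 ≤ P a b) (e : α → γ)
    (W : α → γ → ℝ) (F : β → γ → δ) :
    ∑ x₂, ∑ z, |(∑ x₁, if F x₂ (e x₁) = z then P x₁ x₂ else 0)
        - ∑ y, if F x₂ y = z then ∑ x₁, P x₁ x₂ * W x₁ y else 0|
      ≤ ∑ x₁, ∑ y, |(if e x₁ = y then ∑ x₂, P x₁ x₂ else 0) - (∑ x₂, P x₁ x₂) * W x₁ y| := by
  have hdiff : ∀ x₂ z, (∑ x₁, if F x₂ (e x₁) = z then P x₁ x₂ else 0)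
      - (∑ y, if F x₂ y = z then ∑ x₁, P x₁ x₂ * W x₁ y else 0)
      = ∑ x₁, ∑ y,
          (if F x₂ y = z then P x₁ x₂ else 0) * ((if e x₁ = y then 1 else 0) - W x₁ y) := by
    intro x₂ z
    simp only [mul_sub, sum_sub_distrib]
    congr 1
    · simp [mul_ite, sum_ite_eq]
    · rw [sum_comm]
      simp [ite_mul]
  calc _ ≤ ∑ x₂, ∑ z, ∑ x₁, ∑ y,
          (if F x₂ y = z then P x₁ x₂ else 0) * |(if e x₁ = y then 1 else 0) - W x₁ y| := by
        gcongr with x₂ _ z _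
        rw [hdiff]
        refine (abs_sum_le_sum_abs _ _).trans (sum_le_sum fun x₁ _ => ?_)
        refine (abs_sum_le_sum_abs _ _).trans (sum_le_sum fun y _ => ?_)
        rw [abs_mul, abs_of_nonneg (by split_ifs <;> simp [hP])]
    _ = ∑ x₂, ∑ x₁, ∑ y, P x₁ x₂ * |(if e x₁ = y then 1 else 0) - W x₁ y| := by
        refine sum_congr rfl fun x₂ _ => ?_
        rw [sum_comm]
        refine sum_congr rfl fun x₁ _ => ?_
        rw [sum_comm]
        simp [ite_mul]
    _ = ∑ x₁, ∑ y, (∑ x₂, P x₁ x₂) * |(if e x₁ = y then 1 else 0) - W x₁ y| := by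
        rw [sum_comm]
        simp_rw [sum_mul]
        exact sum_congr rfl fun x₁ _ => sum_comm
    _ = _ := by
        refine sum_congr rfl fun x₁ _ => sum_congr rfl fun y _ => ?_
        conv_lhs => rw [← abs_of_nonneg (sum_nonneg fun x₂ _ => hP x₁ x₂)]
        rw [← abs_mul, mul_sub, mul_ite, mul_one, mul_zero]

lemma sum_abs_decoded_sub_le_pi {ι α β γ δ : Type*} [Fintype ι] [DecidableEq ι] [Fintype α]
    [Fintype β] [Fintype γ] [Fintype δ] [DecidableEq γ] [DecidableEq δ]
    (p : α → β → ℝ) (hp : ∀ a b, 0 ≤ p a b) (W : α → γ → ℝ)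
    (e : (ι → α) → ι → γ) (F : (ι → β) → (ι → γ) → δ) :
    ∑ x₂, ∑ z, |(∑ x₁, if F x₂ (e x₁) = z then ∏ i, p (x₁ i) (x₂ i) else 0)
        - ∑ y, if F x₂ y = z then ∏ i, ∑ a, p a (x₂ i) * W a (y i) else 0|
      ≤ ∑ x₁, ∑ y, |(if e x₁ = y then ∏ i, ∑ b, p (x₁ i) b else 0)
        - ∏ i, (∑ b, p (x₁ i) b) * W (x₁ i) (y i)| := by
  have hmarg : ∀ x₁ : ι → α, ∑ x₂ : ι → β, ∏ i, p (x₁ i) (x₂ i) = ∏ i, ∑ b, p (x₁ i) b :=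
    fun x₁ => (Fintype.prod_sum _).symm
  have hside : ∀ (x₂ : ι → β) (y : ι → γ), ∏ i, ∑ a, p a (x₂ i) * W a (y i)
      = ∑ x₁ : ι → α, (∏ i, p (x₁ i) (x₂ i)) * ∏ i, W (x₁ i) (y i) := by
    intro x₂ y
    simp only [← prod_mul_distrib]
    exact Fintype.prod_sum _
  have h := sum_abs_decoded_sub_le (fun x₁ x₂ => ∏ i, p (x₁ i) (x₂ i))
    (fun _ _ => prod_nonneg fun i _ => hp _ _) e (fun x₁ y => ∏ i, W (x₁ i) (y i)) F
  simp only [hmarg] at h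
  simp only [← hside] at h
  simpa only [prod_mul_distrib] using h

lemma cast_hammingDist_eq_sum {ι R : Type*} {β : ι → Type*} [Fintype ι] [∀ i, DecidableEq (β i)]
    [AddCommMonoidWithOne R] (x y : ∀ i, β i) :
    (hammingDist x y : R) = ∑ i, if x i ≠ y i then 1 else 0 := by
  rw [hammingDist, card_filter]
  push_cast
  rfl

lemma sum_sum_prod_mul_hammingDist_le {ι α : Type*} [Fintype ι] [DecidableEq ι] [Fintype α]
    [DecidableEq α] {q : α → α → ℝ} (hq : ∑ a, ∑ b, q a b = 1) {D : ℝ}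
    (hD : ∑ a, ∑ b, (if b ≠ a then q a b else 0) ≤ D) :
    ∑ x : ι → α, ∑ y : ι → α, (∏ i, q (x i) (y i)) * (hammingDist x y : ℝ)
      ≤ Fintype.card ι * D := by
  simp_rw [cast_hammingDist_eq_sum]
  rw [sum_sum_prod_mul_sum_eq hq fun a b => if a ≠ b then 1 else 0]
  gcongr
  refine le_of_eq_of_le ?_ hD
  simp [mul_ite, ne_comm]

lemma sum_sum_mul_hammingDist_le_add {ι α : Type*} [Fintype ι] [DecidableEq ι] [Fintype α]
    [DecidableEq α]
    {A C : (ι → α) → (ι → α) → ℝ} (hAC : ∑ x, ∑ y, A x y = ∑ x, ∑ y, C x y) :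
    ∑ x, ∑ y, A x y * (hammingDist x y : ℝ)
      ≤ ∑ x, ∑ y, C x y * (hammingDist x y : ℝ)
        + Fintype.card ι / 2 * ∑ x, ∑ y, |A x y - C x y| := by
  have h := sum_mul_le_sum_mul_add_of_sum_eq (A := fun w : (ι → α) × (ι → α) => A w.1 w.2)
    (C := fun w => C w.1 w.2) (f := fun w => (hammingDist w.1 w.2 : ℝ)) (M := Fintype.card ι)
    (by simpa only [Fintype.sum_prod_type] using hAC) (fun _ => Nat.cast_nonneg _)
    (fun _ => Nat.cast_le.mpr hammingDist_le_card_fintype)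
  simpa only [Fintype.sum_prod_type] using h

theorem stmt19_general (n : ℕ) (hn : 0 < n)
    (p : ZMod 2 → ZMod 2 → ℝ) (hp0 : ∀ x₁ x₂, 0 ≤ p x₁ x₂)
    (hp1 : ∑ x₁ : ZMod 2, ∑ x₂ : ZMod 2, p x₁ x₂ = 1)
    (W₁ W₂ : ZMod 2 → ZMod 2 → ℝ)
    (hW₂1 : ∀ x, ∑ xh : ZMod 2, W₂ x xh = 1)
    (D₂ δ₁ δ₂ : ℝ)
    (hdist : ∑ x₂ : ZMod 2, ∑ xh₂ : ZMod 2,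
        (if xh₂ ≠ x₂ then (∑ x₁ : ZMod 2, p x₁ x₂) * W₂ x₂ xh₂ else 0) ≤ D₂)
    (I₁ I₂ : Type)
    (g₁ : (Fin n → ZMod 2) → I₁) (ψ₁ : I₁ → (Fin n → ZMod 2))
    (g₂ : (Fin n → ZMod 2) → I₂)
    (ψ₂ : I₂ → (Fin n → ZMod 2) → (Fin n → ZMod 2))
    (h₁ : (1 / 2) * ∑ x₁ : Fin n → ZMod 2, ∑ xh₁ : Fin n → ZMod 2,
        |(if ψ₁ (g₁ x₁) = xh₁ then ∏ i, (∑ x₂ : ZMod 2, p (x₁ i) x₂) else 0)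
          - ∏ i, (∑ x₂ : ZMod 2, p (x₁ i) x₂) * W₁ (x₁ i) (xh₁ i)| ≤ δ₁)
    (h₂ : (1 / 2) * ∑ x₂ : Fin n → ZMod 2, ∑ xh₂ : Fin n → ZMod 2,
        |(∑ y : Fin n → ZMod 2,
            if ψ₂ (g₂ x₂) y = xh₂ then
              ∏ i, (∑ x₁ : ZMod 2, p x₁ (x₂ i) * W₁ x₁ (y i))
            else 0)
          - ∏ i, (∑ x₁ : ZMod 2, p x₁ (x₂ i)) * W₂ (x₂ i) (xh₂ i)| ≤ δ₂) :
    (1 / (n : ℝ)) * ∑ x₁ : Fin n → ZMod 2, ∑ x₂ : Fin n → ZMod 2,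
      (∏ i, p (x₁ i) (x₂ i)) *
        (hammingDist x₂ (ψ₂ (g₂ x₂) (ψ₁ (g₁ x₁))) : ℝ) ≤ D₂ + δ₁ + δ₂ := by
  let A : (Fin n → ZMod 2) → (Fin n → ZMod 2) → ℝ := fun x₂ z =>
    ∑ x₁, if ψ₂ (g₂ x₂) (ψ₁ (g₁ x₁)) = z then ∏ i, p (x₁ i) (x₂ i) else 0
  let B : (Fin n → ZMod 2) → (Fin n → ZMod 2) → ℝ := fun x₂ z =>
    ∑ y, if ψ₂ (g₂ x₂) y = z then ∏ i, ∑ a, p a (x₂ i) * W₁ a (y i) else 0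
  let C : (Fin n → ZMod 2) → (Fin n → ZMod 2) → ℝ := fun x₂ z =>
    ∏ i, (∑ a, p a (x₂ i)) * W₂ (x₂ i) (z i)
  have hq₂ : ∑ a, ∑ b, (∑ c, p c a) * W₂ a b = 1 := by
    simp_rw [← mul_sum, hW₂1, mul_one]
    rwa [sum_comm]
  have hpush := sum_sum_ite_mul_eq (fun x₁ x₂ => ∏ i, p (x₁ i) (x₂ i))
    (fun x₁ x₂ => ψ₂ (g₂ x₂) (ψ₁ (g₁ x₁)))
  have hA : ∑ x₂, ∑ z, A x₂ z = 1 := by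
    have h := hpush fun _ _ => 1
    simp only [mul_one] at h
    exact h.trans (sum_sum_prod_eq_one hp1)
  have hAB := sum_abs_decoded_sub_le_pi p hp0 W₁ (fun x₁ => ψ₁ (g₁ x₁))
    (fun x₂ y => ψ₂ (g₂ x₂) y)
  have hAC : ∑ x₂, ∑ z, |A x₂ z - C x₂ z| ≤ 2 * δ₁ + 2 * δ₂ := by
    calc ∑ x₂, ∑ z, |A x₂ z - C x₂ z|
        ≤ ∑ x₂, ∑ z, (|A x₂ z - B x₂ z| + |B x₂ z - C x₂ z|) := by
          gcongr with x₂ _ z _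
          exact abs_sub_le _ _ _
      _ ≤ 2 * δ₁ + 2 * δ₂ := by
          rw [sum_congr rfl fun _ _ => sum_add_distrib, sum_add_distrib]
          linarith
  have hCd := sum_sum_prod_mul_hammingDist_le (ι := Fin n) hq₂ hdist
  rw [one_div, inv_mul_le_iff₀ (by exact_mod_cast hn)]
  calc _ = ∑ x₂, ∑ z, A x₂ z * (hammingDist x₂ z : ℝ) := (hpush _).symm
    _ ≤ ∑ x₂, ∑ z, C x₂ z * (hammingDist x₂ z : ℝ)
          + n / 2 * ∑ x₂, ∑ z, |A x₂ z - C x₂ z| := by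
        simpa using sum_sum_mul_hammingDist_le_add (hA.trans (sum_sum_prod_eq_one hq₂).symm)
    _ ≤ n * D₂ + n / 2 * (2 * δ₁ + 2 * δ₂) := by
        gcongr
        simpa using hCd
    _ = n * (D₂ + δ₁ + δ₂) := by ring

/-- **Berger–Tung distributed lossy compression: distortion of the second
source.**  Let `p(x₁,x₂)` be a pmf on `F₂²`, `W₁ = p(x̂₁|x₁)` and
`W₂ = p(x̂₂|x₂)` conditional pmfs with per-letter distortion
`∑ p(x₂)W₂(x̂₂|x₂)1{x̂₂≠x₂} ≤ D₂`.  Assume: (i) for `X̃₁ⁿ` i.i.d. `p(x₁)`,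
the law of `(X̃₁ⁿ, ψ₁(g₁(X̃₁ⁿ)))` is within total variation `δ₁` of
`∏ᵢ p(x₁ᵢ)W₁(x̂₁ᵢ|x₁ᵢ)`; (ii) for `(X̃₂ⁿ,Ỹⁿ)` i.i.d.
`p(x₂,x̂₁) = ∑_{x₁} p(x₁,x₂)W₁(x̂₁|x₁)`, the law of
`(X̃₂ⁿ, ψ₂(g₂(X̃₂ⁿ),Ỹⁿ))` is within total variation `δ₂` of
`∏ᵢ p(x₂ᵢ)W₂(x̂₂ᵢ|x₂ᵢ)`.  Then for `(X₁ⁿ,X₂ⁿ)` i.i.d. `p(x₁,x₂)`,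
`X̂₁ⁿ = ψ₁(g₁(X₁ⁿ))`, `X̂₂ⁿ = ψ₂(g₂(X₂ⁿ), X̂₁ⁿ)`:
`(1/n)·E[d_H(X₂ⁿ,X̂₂ⁿ)] ≤ D₂ + δ₁ + δ₂`. -/
theorem stmt19 (n : ℕ) (hn : 0 < n)
    (p : ZMod 2 → ZMod 2 → ℝ) (hp0 : ∀ x₁ x₂, 0 ≤ p x₁ x₂)
    (hp1 : ∑ x₁ : ZMod 2, ∑ x₂ : ZMod 2, p x₁ x₂ = 1)
    (W₁ W₂ : ZMod 2 → ZMod 2 → ℝ)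
    (hW₁0 : ∀ x xh, 0 ≤ W₁ x xh) (hW₁1 : ∀ x, ∑ xh : ZMod 2, W₁ x xh = 1)
    (hW₂0 : ∀ x xh, 0 ≤ W₂ x xh) (hW₂1 : ∀ x, ∑ xh : ZMod 2, W₂ x xh = 1)
    (D₂ δ₁ δ₂ : ℝ)
    (hdist : ∑ x₂ : ZMod 2, ∑ xh₂ : ZMod 2,
        (if xh₂ ≠ x₂ then (∑ x₁ : ZMod 2, p x₁ x₂) * W₂ x₂ xh₂ else 0) ≤ D₂)
    (I₁ I₂ : Type) [Fintype I₁] [Fintype I₂]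
    (g₁ : (Fin n → ZMod 2) → I₁) (ψ₁ : I₁ → (Fin n → ZMod 2))
    (g₂ : (Fin n → ZMod 2) → I₂)
    (ψ₂ : I₂ → (Fin n → ZMod 2) → (Fin n → ZMod 2))
    (h₁ : (1 / 2) * ∑ x₁ : Fin n → ZMod 2, ∑ xh₁ : Fin n → ZMod 2,
        |(if ψ₁ (g₁ x₁) = xh₁ then ∏ i, (∑ x₂ : ZMod 2, p (x₁ i) x₂) else 0)
          - ∏ i, (∑ x₂ : ZMod 2, p (x₁ i) x₂) * W₁ (x₁ i) (xh₁ i)| ≤ δ₁)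
    (h₂ : (1 / 2) * ∑ x₂ : Fin n → ZMod 2, ∑ xh₂ : Fin n → ZMod 2,
        |(∑ y : Fin n → ZMod 2,
            if ψ₂ (g₂ x₂) y = xh₂ then
              ∏ i, (∑ x₁ : ZMod 2, p x₁ (x₂ i) * W₁ x₁ (y i))
            else 0)
          - ∏ i, (∑ x₁ : ZMod 2, p x₁ (x₂ i)) * W₂ (x₂ i) (xh₂ i)| ≤ δ₂) :
    (1 / (n : ℝ)) * ∑ x₁ : Fin n → ZMod 2, ∑ x₂ : Fin n → ZMod 2,
      (∏ i, p (x₁ i) (x₂ i)) *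
        (hammingDist x₂ (ψ₂ (g₂ x₂) (ψ₁ (g₁ x₁))) : ℝ) ≤ D₂ + δ₁ + δ₂ :=
  stmt19_general n hn p hp0 hp1 W₁ W₂ hW₂1 D₂ δ₁ δ₂ hdist I₁ I₂ g₁ ψ₁ g₂ ψ₂ h₁ h₂
end
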